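/- Let ν be a Borel measure on B with ∫_B |l| ν(dl) < ∞. Assume that for each ε ∈ (0,1], l ∈ B and v ∈ L² there is a continuous Φ(·,ε,l,v) : [0,ε] → L² satisfying Φ(t,ε,l,v) = v + l ∫₀ᵗ ḡ(Φ(s,ε,l,v)) ds for all t ∈ [0,ε], depending measurably on l, and define H(ε,l,v) := Φ(ε,ε,l,v) − v − ε l ḡ(v) and b(ε,v) := ∫_B H(ε,l,v) ν(dl) (a Bochner integral in L²). Then there exists a constant C > 0, depending only on h, μ and ν, such that for every ε ∈ (0,1] and every v ∈ L²: ‖b(ε,v)‖_{L²} ≤ C (e^{Cε} − 1)(1 + ‖v‖_{L²}). -/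

import Mathlib

/-!
Because `h` is essentially bounded, `ḡ` is Lipschitz on `L²` with constant `K = ‖h‖_∞`. For
`|l| < 1` the displacement `φ t = ‖Φ t - v‖` then satisfies `φ t ≤ K ∫₀ᵗ φ + ‖ḡ v‖ t`, and
Grönwall's inequality for the primitive of `φ` gives `K ∫₀^ε φ ≤ ‖ḡ v‖ ε (e^{Kε} - 1)`. As
`H(ε,l,v) = l ∫₀^ε (ḡ (Φ s) - ḡ v) ds`, this bounds `‖H(ε,l,v)‖` by `|l| ‖ḡ v‖ (e^{Kε} - 1)`;
integrating against `ν` and using `‖ḡ v‖ ≤ (K + ‖ḡ 0‖)(1 + ‖v‖)` finishes the proof.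
-/

open MeasureTheory
open scoped RealInnerProductSpace ENNReal

/-- The cross product on `ℝ³ = EuclideanSpace ℝ (Fin 3)`. -/
noncomputable def cross3 (a b : EuclideanSpace ℝ (Fin 3)) : EuclideanSpace ℝ (Fin 3) :=
  WithLp.toLp 2 ![a 1 * b 2 - a 2 * b 1, a 2 * b 0 - a 0 * b 2, a 0 * b 1 - a 1 * b 0]

open Set

lemma sub_cross3 (a b c : EuclideanSpace ℝ (Fin 3)) :
    cross3 (a - b) c = cross3 a c - cross3 b c := by
  ext i
  fin_cases i <;> simp [cross3] <;> ring

lemma norm_cross3_le (a b : EuclideanSpace ℝ (Fin 3)) : ‖cross3 a b‖ ≤ ‖a‖ * ‖b‖ := by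
  have hprod : ‖a‖ * ‖b‖ = √((∑ i, ‖a i‖ ^ 2) * ∑ i, ‖b i‖ ^ 2) := by
    rw [EuclideanSpace.norm_eq, EuclideanSpace.norm_eq, Real.sqrt_mul (by positivity)]
  rw [EuclideanSpace.norm_eq, hprod]
  gcongr
  simp only [Fin.sum_univ_three, Real.norm_eq_abs, sq_abs, cross3, PiLp.toLp_apply,
    Matrix.cons_val_zero, Matrix.cons_val_one, Matrix.head_cons, Matrix.cons_val_two,
    Matrix.tail_cons]
  -- Lagrange's identity: |a|²|b|² = |a × b|² + ⟨a, b⟩²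
  nlinarith [sq_nonneg (a 0 * b 0 + a 1 * b 1 + a 2 * b 2)]

lemma lipschitzWith_of_ae_eq_cross3_add {𝒪 : Type*} [MeasurableSpace 𝒪] {μ : Measure 𝒪}
    {p : ℝ≥0∞} [Fact (1 ≤ p)] {h : 𝒪 → EuclideanSpace ℝ (Fin 3)} {K : NNReal}
    (hK : ∀ᵐ x ∂μ, ‖h x‖ ≤ K)
    {gbar : Lp (EuclideanSpace ℝ (Fin 3)) p μ → Lp (EuclideanSpace ℝ (Fin 3)) p μ}
    (hgbar : ∀ v, ∀ᵐ x ∂μ, gbar v x = cross3 (v x) (h x) + h x) :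
    LipschitzWith K gbar := by
  refine LipschitzWith.of_dist_le_mul fun u w => ?_
  rw [dist_eq_norm, dist_eq_norm]
  refine Lp.norm_le_mul_norm_of_ae_le_mul ?_
  filter_upwards [hgbar u, hgbar w, Lp.coeFn_sub (gbar u) (gbar w), Lp.coeFn_sub u w, hK]
    with x hu hw hsub_g hsub hx
  rw [hsub_g, hsub, Pi.sub_apply, Pi.sub_apply, hu, hw, add_sub_add_right_eq_sub,
    ← sub_cross3, mul_comm]
  exact (norm_cross3_le _ _).trans (by gcongr)

lemma mul_gronwallBound_zero (K δ x : ℝ) :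
    K * gronwallBound 0 K δ x = δ * (Real.exp (K * x) - 1) := by
  rcases eq_or_ne K 0 with rfl | hK
  · simp [gronwallBound_K0]
  · rw [gronwallBound_of_K_ne_0 hK]
    field_simp
    ring

lemma mul_integral_le_of_le_mul_integral_add {φ : ℝ → ℝ} {K A ε : ℝ} (hφ : Continuous φ)
    (hK : 0 ≤ K) (hA : 0 ≤ A) (hε : 0 ≤ ε) (hφ0 : ∀ t ∈ Icc 0 ε, 0 ≤ φ t)
    (hφle : ∀ t ∈ Icc 0 ε, φ t ≤ K * (∫ s in 0..t, φ s) + A * t) :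
    K * ∫ s in 0..ε, φ s ≤ A * ε * (Real.exp (K * ε) - 1) := by
  set G : ℝ → ℝ := fun t => ∫ s in 0..t, φ s
  have hG : ∀ t, HasDerivAt G (φ t) t := fun t => hφ.integral_hasStrictDerivAt 0 t |>.hasDerivAt
  have hG0 : ∀ t ∈ Icc 0 ε, 0 ≤ G t := fun t ht =>
    intervalIntegral.integral_nonneg ht.1 fun s hs => hφ0 s ⟨hs.1, hs.2.trans ht.2⟩
  have hGc : Continuous G := continuous_iff_continuousAt.2 fun t => (hG t).continuousAt
  have hG' : ∀ t ∈ Ico 0 ε, ‖φ t‖ ≤ K * ‖G t‖ + A * ε := fun t ht => by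
    rw [Real.norm_eq_abs, Real.norm_eq_abs, abs_of_nonneg (hφ0 t (Ico_subset_Icc_self ht)),
      abs_of_nonneg (hG0 t (Ico_subset_Icc_self ht))]
    exact (hφle t (Ico_subset_Icc_self ht)).trans (by gcongr; exact ht.2.le)
  have hGε : G ε ≤ gronwallBound 0 K (A * ε) ε := by
    simpa [abs_of_nonneg (hG0 ε ⟨hε, le_rfl⟩)] using
      norm_le_gronwallBound_of_norm_deriv_right_le hGc.continuousOn
        (fun t _ => (hG t).hasDerivWithinAt) (by simp [G]) hG' ε ⟨hε, le_rfl⟩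
  calc K * G ε ≤ K * gronwallBound 0 K (A * ε) ε := by gcongr
    _ = A * ε * (Real.exp (K * ε) - 1) := mul_gronwallBound_zero ..

lemma LipschitzWith.norm_le_mul_one_add_norm {E F : Type*} [SeminormedAddCommGroup E]
    [SeminormedAddCommGroup F] {f : E → F} {K : NNReal} (hf : LipschitzWith K f) (x : E) :
    ‖f x‖ ≤ (K + ‖f 0‖) * (1 + ‖x‖) := by
  have hfx : ‖f x - f 0‖ ≤ K * ‖x‖ := by simpa using hf.norm_sub_le x 0
  nlinarith [norm_le_insert' (f x) (f 0), norm_nonneg (f 0), norm_nonneg x, K.2]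

section IntegralEquation

variable {E : Type*} [NormedAddCommGroup E] [NormedSpace ℝ E] {g : E → E}
  {K : NNReal} {ψ : ℝ → E} {v : E} {l ε : ℝ}

lemma norm_sub_le_mul_integral_add (hg : LipschitzWith K g) (hψ : Continuous ψ) (hl : |l| ≤ 1)
    (heq : ∀ t ∈ Icc 0 ε, ψ t = v + l • ∫ s in 0..t, g (ψ s)) {t : ℝ} (ht : t ∈ Icc 0 ε) :
    ‖ψ t - v‖ ≤ K * (∫ s in 0..t, ‖ψ s - v‖) + ‖g v‖ * t := by
  have hgψ : Continuous fun s => g (ψ s) := hg.continuous.comp hψ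
  have hdisp : Continuous fun s => ‖ψ s - v‖ := (hψ.sub continuous_const).norm
  calc ‖ψ t - v‖ = |l| * ‖∫ s in 0..t, g (ψ s)‖ := by
        rw [heq t ht, add_sub_cancel_left, norm_smul, Real.norm_eq_abs]
    _ ≤ ‖∫ s in 0..t, g (ψ s)‖ := mul_le_of_le_one_left (norm_nonneg _) hl
    _ ≤ ∫ s in 0..t, ‖g (ψ s)‖ := intervalIntegral.norm_integral_le_integral_norm ht.1
    _ ≤ ∫ s in 0..t, (K * ‖ψ s - v‖ + ‖g v‖) := by
        refine intervalIntegral.integral_mono_on ht.1 (hgψ.norm.intervalIntegrable _ _)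
          ((continuous_const.mul hdisp).add continuous_const |>.intervalIntegrable _ _)
          fun s _ => ?_
        calc ‖g (ψ s)‖ ≤ ‖g v‖ + ‖g (ψ s) - g v‖ := norm_le_insert' _ _
          _ ≤ ‖g v‖ + K * ‖ψ s - v‖ := by gcongr; exact hg.norm_sub_le _ _
          _ = K * ‖ψ s - v‖ + ‖g v‖ := add_comm _ _
    _ = K * (∫ s in 0..t, ‖ψ s - v‖) + ‖g v‖ * t := by
        rw [intervalIntegral.integral_add ((hdisp.intervalIntegrable _ _).const_mul _)
          intervalIntegrable_const, intervalIntegral.integral_const_mul,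
          intervalIntegral.integral_const, smul_eq_mul, sub_zero, mul_comm t]

lemma norm_sub_sub_smul_le_of_continuous [CompleteSpace E] (hg : LipschitzWith K g)
    (hψ : Continuous ψ) (hl : |l| ≤ 1) (hε : 0 ≤ ε)
    (heq : ∀ t ∈ Icc 0 ε, ψ t = v + l • ∫ s in 0..t, g (ψ s)) :
    ‖ψ ε - v - (ε * l) • g v‖ ≤ |l| * (‖g v‖ * ε * (Real.exp (K * ε) - 1)) := by
  have hgψ : Continuous fun s => g (ψ s) := hg.continuous.comp hψ
  have hdisp : Continuous fun s => ‖ψ s - v‖ := (hψ.sub continuous_const).norm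
  have hH : ψ ε - v - (ε * l) • g v = l • ∫ s in 0..ε, (g (ψ s) - g v) := by
    rw [heq ε ⟨hε, le_rfl⟩, intervalIntegral.integral_sub (hgψ.intervalIntegrable _ _)
      intervalIntegrable_const, intervalIntegral.integral_const, sub_zero, smul_sub, smul_smul,
      mul_comm l ε, add_sub_cancel_left]
  rw [hH, norm_smul, Real.norm_eq_abs]
  gcongr
  calc ‖∫ s in 0..ε, (g (ψ s) - g v)‖ ≤ ∫ s in 0..ε, ‖g (ψ s) - g v‖ :=
        intervalIntegral.norm_integral_le_integral_norm hε
    _ ≤ ∫ s in 0..ε, K * ‖ψ s - v‖ :=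
        intervalIntegral.integral_mono_on hε
          ((hgψ.sub continuous_const).norm.intervalIntegrable _ _)
          ((continuous_const.mul hdisp).intervalIntegrable _ _) fun s _ => hg.norm_sub_le _ _
    _ = K * ∫ s in 0..ε, ‖ψ s - v‖ := intervalIntegral.integral_const_mul ..
    _ ≤ ‖g v‖ * ε * (Real.exp (K * ε) - 1) :=
        mul_integral_le_of_le_mul_integral_add hdisp K.2 (norm_nonneg _) hε
          (fun _ _ => norm_nonneg _) fun t ht => norm_sub_le_mul_integral_add hg hψ hl heq ht

lemma norm_sub_sub_smul_le [CompleteSpace E] (hg : LipschitzWith K g)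
    (hψ : ContinuousOn ψ (Icc 0 ε)) (hl : |l| ≤ 1) (hε : 0 ≤ ε)
    (heq : ∀ t ∈ Icc 0 ε, ψ t = v + l • ∫ s in 0..t, g (ψ s)) :
    ‖ψ ε - v - (ε * l) • g v‖ ≤ |l| * (‖g v‖ * ε * (Real.exp (K * ε) - 1)) := by
  set ψ' : ℝ → E := IccExtend hε ((Icc 0 ε).domRestrict ψ)
  have hψ' : ∀ t ∈ Icc 0 ε, ψ' t = ψ t := fun t ht => IccExtend_of_mem hε _ ht
  have heq' : ∀ t ∈ Icc 0 ε, ψ' t = v + l • ∫ s in 0..t, g (ψ' s) := fun t ht => by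
    rw [hψ' t ht, heq t ht, intervalIntegral.integral_congr fun s hs => ?_]
    rw [uIcc_of_le ht.1] at hs
    rw [hψ' s ⟨hs.1, hs.2.trans ht.2⟩]
  rw [← hψ' ε ⟨hε, le_rfl⟩]
  exact norm_sub_sub_smul_le_of_continuous hg
    (continuous_IccExtend_iff.2 hψ.domRestrict) hl hε heq'

lemma norm_sub_sub_smul_le_mul_one_add_norm [CompleteSpace E] (hg : LipschitzWith K g)
    (hψ : ContinuousOn ψ (Icc 0 ε)) (hl : |l| ≤ 1) (hε : 0 ≤ ε) (hε1 : ε ≤ 1)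
    (heq : ∀ t ∈ Icc 0 ε, ψ t = v + l • ∫ s in 0..t, g (ψ s)) :
    ‖ψ ε - v - (ε * l) • g v‖
      ≤ |l| * ((K + ‖g 0‖) * (Real.exp (K * ε) - 1) * (1 + ‖v‖)) := by
  refine (norm_sub_sub_smul_le hg hψ hl hε heq).trans (mul_le_mul_of_nonneg_left ?_ (abs_nonneg l))
  have hexp : 0 ≤ Real.exp (K * ε) - 1 := sub_nonneg.2 (Real.one_le_exp (by positivity))
  have hgv := hg.norm_le_mul_one_add_norm v
  calc ‖g v‖ * ε * (Real.exp (K * ε) - 1)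
      ≤ (K + ‖g 0‖) * (1 + ‖v‖) * 1 * (Real.exp (K * ε) - 1) := by gcongr
    _ = (K + ‖g 0‖) * (Real.exp (K * ε) - 1) * (1 + ‖v‖) := by ring

end IntegralEquation

theorem marcus_b_eps_growth_general
    {𝒪 : Type*} [MeasurableSpace 𝒪] (μ : Measure 𝒪) [IsFiniteMeasure μ]
    (h : 𝒪 → EuclideanSpace ℝ (Fin 3)) (hbdd : MemLp h ⊤ μ)
    (gbar : Lp (EuclideanSpace ℝ (Fin 3)) 2 μ → Lp (EuclideanSpace ℝ (Fin 3)) 2 μ)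
    (hgbar : ∀ v, ∀ᵐ x ∂μ, gbar v x = cross3 (v x) (h x) + h x)
    (ν : Measure ℝ) (hνB : ∀ᵐ l ∂ν, 0 < |l| ∧ |l| < 1)
    (hνint : ∫⁻ l, ENNReal.ofReal |l| ∂ν < ⊤)
    (Φ : ℝ → ℝ → ℝ → Lp (EuclideanSpace ℝ (Fin 3)) 2 μ → Lp (EuclideanSpace ℝ (Fin 3)) 2 μ)
    (hΦc : ∀ (ε : ℝ), 0 < ε → ε ≤ 1 → ∀ (l : ℝ), 0 < |l| → |l| < 1 →
      ∀ v, ContinuousOn (fun t => Φ t ε l v) (Set.Icc 0 ε))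
    (hΦeq : ∀ (ε : ℝ), 0 < ε → ε ≤ 1 → ∀ (l : ℝ), 0 < |l| → |l| < 1 →
      ∀ v, ∀ t ∈ Set.Icc (0:ℝ) ε, Φ t ε l v = v + l • ∫ s in (0:ℝ)..t, gbar (Φ s ε l v)) :
    ∃ C : ℝ, 0 < C ∧
      ∀ (ε : ℝ), 0 < ε → ε ≤ 1 →
      ∀ v : Lp (EuclideanSpace ℝ (Fin 3)) 2 μ,
        ‖∫ l, (Φ ε ε l v - v - (ε * l) • gbar v) ∂ν‖
          ≤ C * (Real.exp (C * ε) - 1) * (1 + ‖v‖) := by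
  set K : NNReal := (lpNorm h ∞ μ).toNNReal
  have hgbar_lip : LipschitzWith K gbar := lipschitzWith_of_ae_eq_cross3_add
    (by filter_upwards [ae_le_lpNorm_exponent_top hbdd] with x hx
        using hx.trans (Real.le_coe_toNNReal _)) hgbar
  have habs_int : Integrable (fun l : ℝ => |l|) ν :=
    ⟨continuous_abs.aestronglyMeasurable,
      (hasFiniteIntegral_iff_ofReal (ae_of_all _ abs_nonneg)).2 hνint⟩
  set L : ℝ := ∫ l, |l| ∂ν
  have hL : 0 ≤ L := integral_nonneg fun _ => abs_nonneg _
  set C : ℝ := K + L * (K + ‖gbar 0‖) + 1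
  refine ⟨C, by positivity, fun ε hε hε1 v => ?_⟩
  have hH : ∀ᵐ l ∂ν, ‖Φ ε ε l v - v - (ε * l) • gbar v‖
      ≤ |l| * ((K + ‖gbar 0‖) * (Real.exp (K * ε) - 1) * (1 + ‖v‖)) := by
    filter_upwards [hνB] with l ⟨hl0, hl1⟩
    exact norm_sub_sub_smul_le_mul_one_add_norm (ψ := fun t => Φ t ε l v) hgbar_lip
      (hΦc ε hε hε1 l hl0 hl1 v) hl1.le hε.le hε1 (hΦeq ε hε hε1 l hl0 hl1 v)
  calc ‖∫ l, (Φ ε ε l v - v - (ε * l) • gbar v) ∂ν‖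
      ≤ ∫ l, |l| * ((K + ‖gbar 0‖) * (Real.exp (K * ε) - 1) * (1 + ‖v‖)) ∂ν :=
        norm_integral_le_of_norm_le (habs_int.mul_const _) hH
    _ = L * (K + ‖gbar 0‖) * (Real.exp (K * ε) - 1) * (1 + ‖v‖) := by
        rw [integral_mul_const]; ring
    _ ≤ C * (Real.exp (C * ε) - 1) * (1 + ‖v‖) := by
        have hexp : 0 ≤ Real.exp (K * ε) - 1 := sub_nonneg.2 (Real.one_le_exp (by positivity))
        have hLK : 0 ≤ L * (K + ‖gbar 0‖) := by positivity
        gcongr <;> linarith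

/-- growth of `b(ε,v) = ∫_B H(ε,l,v) ν(dl)` where
`H(ε,l,v) = Φ(ε,ε,l,v) − v − ε l ḡ(v)`, for a measure `ν` on `B` with `∫_B |l| ν(dl) < ∞`:
`‖b(ε,v)‖ ≤ C (e^{Cε} − 1)(1 + ‖v‖)`. -/
theorem marcus_b_eps_growth
    {𝒪 : Type*} [MeasurableSpace 𝒪] (μ : Measure 𝒪) [IsFiniteMeasure μ]
    (h : 𝒪 → EuclideanSpace ℝ (Fin 3)) (hmeas : Measurable h) (hbdd : MemLp h ⊤ μ)
    (gbar : Lp (EuclideanSpace ℝ (Fin 3)) 2 μ → Lp (EuclideanSpace ℝ (Fin 3)) 2 μ)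
    (hgbar : ∀ v, ∀ᵐ x ∂μ, gbar v x = cross3 (v x) (h x) + h x)
    (ν : Measure ℝ) (hνB : ∀ᵐ l ∂ν, 0 < |l| ∧ |l| < 1)
    (hνint : ∫⁻ l, ENNReal.ofReal |l| ∂ν < ⊤)
    (Φ : ℝ → ℝ → ℝ → Lp (EuclideanSpace ℝ (Fin 3)) 2 μ → Lp (EuclideanSpace ℝ (Fin 3)) 2 μ)
    (hΦc : ∀ (ε : ℝ), 0 < ε → ε ≤ 1 → ∀ (l : ℝ), 0 < |l| → |l| < 1 →
      ∀ v, ContinuousOn (fun t => Φ t ε l v) (Set.Icc 0 ε))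
    (hΦeq : ∀ (ε : ℝ), 0 < ε → ε ≤ 1 → ∀ (l : ℝ), 0 < |l| → |l| < 1 →
      ∀ v, ∀ t ∈ Set.Icc (0:ℝ) ε, Φ t ε l v = v + l • ∫ s in (0:ℝ)..t, gbar (Φ s ε l v))
    (hΦmeas : ∀ (ε : ℝ), 0 < ε → ε ≤ 1 →
      ∀ v, AEStronglyMeasurable (fun l => Φ ε ε l v) ν) :
    ∃ C : ℝ, 0 < C ∧
      ∀ (ε : ℝ), 0 < ε → ε ≤ 1 →
      ∀ v : Lp (EuclideanSpace ℝ (Fin 3)) 2 μ,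
        ‖∫ l, (Φ ε ε l v - v - (ε * l) • gbar v) ∂ν‖
          ≤ C * (Real.exp (C * ε) - 1) * (1 + ‖v‖) :=
  marcus_b_eps_growth_general μ h hbdd gbar hgbar ν hνB hνint Φ hΦc hΦeq
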